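/- Let T be a theory, Θ a set of uniqueness formulas in (T,⊢), and suppose that for every atomic formula φ(x₀,…,xₙ) and all θ₀,…,θₙ ∈ Θ, T decides the sentence ∃x₀…∃xₙ (φ(x₀,…,xₙ) ∧ θ₀(x₀) ∧ … ∧ θₙ(xₙ)) (i.e., proves it or its negation). Then the theory [T, ⊢_Θ] of sentences derivable from T with the Θ-rule is complete. -/

import Mathlib

open FirstOrder FirstOrder.Language Cardinal Set

universe u v w w2

/-- The universal closure `∀x φ(x)` of a formula in one free variable. -/
noncomputable def allClose {L : Language} (φ : L.Formula Unit) : L.Sentence :=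
  Formula.iAlls Unit (φ.relabel (fun _ : Unit => (Sum.inr () : Empty ⊕ Unit)))

/-- The existential closure `∃x φ(x)` of a formula in one free variable. -/
noncomputable def exClose {L : Language} (φ : L.Formula Unit) : L.Sentence :=
  Formula.iExs Unit (φ.relabel (fun _ : Unit => (Sum.inr () : Empty ⊕ Unit)))

/-- Substitution of a closed term for the unique free variable. -/
noncomputable def substC {L : Language} (φ : L.Formula Unit) (t : L.Term Empty) : L.Sentence :=
  φ.subst (fun _ => t)


/-- The sentence `∃x (θ(x) ∧ ∀y (θ(y) → x = y))`. -/
noncomputable def uniqSentence {L : Language} (θ : L.Formula Unit) : L.Sentence :=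
  exClose (θ ⊓ Formula.iAlls Unit (Formula.relabel (id : Unit ⊕ Unit → Unit ⊕ Unit)
    ((θ.relabel Sum.inr).imp (Term.equal (Term.var (Sum.inl ())) (Term.var (Sum.inr ()))))))

/-- `θ` is a uniqueness formula in `(T, ⊢)`. -/
def IsUniquenessFormula {L : Language} (T : L.Theory) (θ : L.Formula Unit) : Prop :=
  T ⊨ᵇ uniqSentence θ


/-- The `Θ`-atomic-style closure `∃x₀…∃xₙ (φ(x₀,…,xₙ) ∧ θ₀(x₀) ∧ … ∧ θₙ(xₙ))`. -/
noncomputable def thetaClose {L : Language} {n : ℕ} (φ : L.Formula (Fin n))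
    (θs : Fin n → L.Formula Unit) : L.Sentence :=
  Formula.iExs (Fin n) (Formula.relabel (Sum.inr : Fin n → Empty ⊕ Fin n)
    (φ ⊓ (List.ofFn fun i => (θs i).relabel fun _ => i).foldr (· ⊓ ·) ⊤))


/-- Provability generated by first-order provability together with the `Θ`-rule
(with premises `∃x (φ(x) ∧ θ(x))`). -/
inductive ThetaProv (L : Language) (Θ : Set (L.Formula Unit)) (T : L.Theory) : L.Sentence → Prop
  | ax {σ} (h : σ ∈ T) : ThetaProv L Θ T σ
  | fo (T' : L.Theory) (h : ∀ σ ∈ T', ThetaProv L Θ T σ) {σ} (hσ : T' ⊨ᵇ σ) : ThetaProv L Θ T σ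
  | rule (φ : L.Formula Unit) (h : ∀ θ ∈ Θ, ThetaProv L Θ T (exClose (φ ⊓ θ))) :
      ThetaProv L Θ T (allClose φ)

/-! In a model of the Θ-closure `S` of `T`, every `θ ∈ Θ` defines a unique element. By induction
on `ψ(x₀, …, x_{n-1})`, `S` decides `ψ` at every tuple of such definable elements: the atomic case
is the hypothesis and implication is propositional. For `∀y χ`, either some definable `d` refutes
`χ(c̄, d)`, or `S` proves `χ(c̄, d)` for every definable `d`, i.e. it proves all premises of the
Θ-rule for `χ(c̄, y)`, which then yields `∀y χ(c̄, y)`. Sentences are the case `n = 0`. -/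

open BoundedFormula Theory

section Realize

variable {L : Language} {M : Type*} [L.Structure M]

def Defines {ι : Type*} (θs : ι → L.Formula Unit) (xs : ι → M) : Prop :=
  ∀ i, (θs i).Realize fun _ => xs i

theorem defines_snoc {n : ℕ} {θs : Fin n → L.Formula Unit} {θ : L.Formula Unit}
    {xs : Fin n → M} {a : M} :
    Defines (Fin.snoc θs θ : Fin (n + 1) → _) (Fin.snoc xs a : Fin (n + 1) → M) ↔
      Defines θs xs ∧ θ.Realize fun _ => a := by
  simp [Defines, Fin.forall_fin_succ', Fin.snoc_castSucc, Fin.snoc_last]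

@[simp]
theorem realize_exClose {φ : L.Formula Unit} : M ⊨ exClose φ ↔ ∃ a : M, φ.Realize fun _ => a := by
  simp only [exClose, Sentence.Realize, Formula.realize_iExs, Formula.realize_relabel]
  exact ⟨fun ⟨i, h⟩ => ⟨i (), h⟩, fun ⟨a, h⟩ => ⟨fun _ => a, h⟩⟩

@[simp]
theorem realize_allClose {φ : L.Formula Unit} : M ⊨ allClose φ ↔ ∀ a : M, φ.Realize fun _ => a := by
  simp only [allClose, Sentence.Realize, Formula.realize_iAlls, Formula.realize_relabel]
  exact ⟨fun h a => h fun _ => a, fun h i => h (i ())⟩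

@[simp]
theorem realize_uniqSentence {θ : L.Formula Unit} :
    M ⊨ uniqSentence θ ↔ ∃! a : M, θ.Realize fun _ => a := by
  simp only [uniqSentence, realize_exClose, Formula.realize_inf, Formula.realize_iAlls,
    Formula.realize_relabel, Formula.realize_imp, Formula.realize_equal]
  exact exists_congr fun a => and_congr_right fun _ =>
    ⟨fun h b hb => (h (fun _ => b) hb).symm, fun h i hi => (h (i ()) hi).symm⟩

@[simp]
theorem realize_thetaClose {n : ℕ} {φ : L.Formula (Fin n)} {θs : Fin n → L.Formula Unit} :
    M ⊨ thetaClose φ θs ↔ ∃ xs : Fin n → M, φ.Realize xs ∧ Defines θs xs := by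
  simp only [thetaClose, Sentence.Realize, Formula.realize_iExs, Formula.realize_relabel,
    Formula.realize_inf]
  refine exists_congr fun xs => and_congr_right fun _ => ?_
  simp only [Formula.Realize, realize_foldr_inf, List.mem_ofFn, forall_exists_index,
    forall_apply_eq_imp_iff]
  exact forall_congr' fun _ => Formula.realize_relabel

end Realize

theorem forall_snoc_mem {α : Type*} {s : Set α} {n : ℕ} {a : Fin n → α} {b : α}
    (ha : ∀ i, a i ∈ s) (hb : b ∈ s) : ∀ i, (Fin.snoc a b : Fin (n + 1) → α) i ∈ s :=
  Fin.lastCases (by simpa using hb) (by simpa using ha)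

theorem FirstOrder.Language.BoundedFormula.IsAtomic.toFormula {L : Language} {α : Type*} {n : ℕ}
    {ψ : L.BoundedFormula α n} (h : ψ.IsAtomic) : ψ.toFormula.IsAtomic := by
  cases h <;> constructor

section Subst

variable {L : Language} {k : ℕ}

/-- `χ(c₀, …, c_{k-1}, y)` with free variable `y`, where `cⱼ` is the element defined by `θs j`,
written as `∃ x₀ … x_{k-1}, χ(x₀, …, x_{k-1}, y) ∧ ⋀ⱼ θs j (xⱼ)`. -/
noncomputable def substInit (χ : L.BoundedFormula Empty (k + 1)) (θs : Fin k → L.Formula Unit) :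
    L.Formula Unit :=
  Formula.iExs (Fin k)
    (χ.toFormula.relabel (Sum.elim Empty.elim (Fin.lastCases (Sum.inl ()) Sum.inr)) ⊓
      Formula.iInf fun j => (θs j).relabel fun _ => Sum.inr j)

theorem realize_substInit {M : Type*} [L.Structure M] {χ : L.BoundedFormula Empty (k + 1)}
    {θs : Fin k → L.Formula Unit} {b : M} :
    (substInit χ θs).Realize (fun _ => b) ↔
      ∃ xs, Defines θs xs ∧ χ.Realize default (Fin.snoc xs b : Fin (k + 1) → M) := by
  simp only [substInit, Formula.realize_iExs, Formula.realize_inf, Formula.realize_relabel,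
    realize_toFormula, Formula.realize_iInf]
  refine exists_congr fun xs => ?_
  have hvars : (Sum.elim (fun _ => b) xs ∘ Sum.elim Empty.elim
      (Fin.lastCases (Sum.inl ()) Sum.inr : Fin (k + 1) → Unit ⊕ Fin k)) ∘ Sum.inr =
      Fin.snoc xs b :=
    funext (Fin.lastCases (by simp) (by simp))
  rw [hvars, Subsingleton.elim (_ ∘ Sum.inl) default, and_comm]
  rfl

end Subst

section ThetaRule

variable {L : FirstOrder.Language.{u, v}}

structure ClosedUnderThetaRule (S : L.Theory) (Θ : Set (L.Formula Unit)) : Prop where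
  models_uniqSentence : ∀ θ ∈ Θ, S ⊨ᵇ uniqSentence θ
  models_allClose : ∀ φ : L.Formula Unit, (∀ θ ∈ Θ, S ⊨ᵇ exClose (φ ⊓ θ)) → S ⊨ᵇ allClose φ

def DecidesThetaAtomic (S : L.Theory) (Θ : Set (L.Formula Unit)) : Prop :=
  ∀ (n : ℕ) (φ : L.Formula (Fin (n + 1))), φ.IsAtomic →
    ∀ θs : Fin (n + 1) → L.Formula Unit, (∀ i, θs i ∈ Θ) →
      S ⊨ᵇ thetaClose φ θs ∨ S ⊨ᵇ (thetaClose φ θs).not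

def HoldsAtDefined (S : L.Theory) {n : ℕ} (θs : Fin n → L.Formula Unit)
    (ψ : L.BoundedFormula Empty n) : Prop :=
  ∀ (M : ModelType.{u, v, max u v} S) (xs : Fin n → M), Defines θs xs → ψ.Realize default xs

def Decided (S : L.Theory) (Θ : Set (L.Formula Unit)) {n : ℕ} (ψ : L.BoundedFormula Empty n) :
    Prop :=
  ∀ θs : Fin n → L.Formula Unit, (∀ i, θs i ∈ Θ) →
    HoldsAtDefined S θs ψ ∨ HoldsAtDefined S θs ψ.not

variable {S : L.Theory} {Θ : Set (L.Formula Unit)}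

theorem holdsAtDefined_iff_models {θs : Fin 0 → L.Formula Unit} {σ : L.Sentence} :
    HoldsAtDefined S θs σ ↔ S ⊨ᵇ σ :=
  ⟨fun h M v xs => Subsingleton.elim default v ▸ h M xs finZeroElim,
    fun h M xs _ => h M default xs⟩

theorem decided_falsum {n : ℕ} : Decided S Θ (⊥ : L.BoundedFormula Empty n) :=
  fun _ _ => Or.inr fun _ _ _ => not_false

theorem Decided.imp {n : ℕ} {ψ₁ ψ₂ : L.BoundedFormula Empty n} (h₁ : Decided S Θ ψ₁)
    (h₂ : Decided S Θ ψ₂) : Decided S Θ (ψ₁.imp ψ₂) := by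
  intro θs hθs
  simp only [HoldsAtDefined, realize_not, realize_imp] at *
  rcases h₁ θs hθs with h₁ | h₁
  · rcases h₂ θs hθs with h₂ | h₂
    · exact Or.inl fun M xs hxs _ => h₂ M xs hxs
    · exact Or.inr fun M xs hxs h => h₂ M xs hxs (h (h₁ M xs hxs))
  · exact Or.inl fun M xs hxs h => absurd h (h₁ M xs hxs)

namespace ClosedUnderThetaRule

theorem exists_realize (hS : ClosedUnderThetaRule S Θ) {θ : L.Formula Unit} (hθ : θ ∈ Θ)
    (M : S.ModelType) :
    ∃ a : M, θ.Realize fun _ => a :=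
  (realize_uniqSentence.1 ((hS.models_uniqSentence θ hθ).realize_sentence M)).exists

theorem existsUnique_defines (hS : ClosedUnderThetaRule S Θ) {ι : Type*}
    {θs : ι → L.Formula Unit} (hθs : ∀ i, θs i ∈ Θ) (M : S.ModelType) :
    ∃! xs : ι → M, Defines θs xs := by
  choose xs hxs huniq using fun i =>
    realize_uniqSentence.1 ((hS.models_uniqSentence (θs i) (hθs i)).realize_sentence M)
  exact ⟨xs, hxs, fun ys hys => funext fun i => huniq i (ys i) (hys i)⟩

theorem realize_thetaClose_iff (hS : ClosedUnderThetaRule S Θ) {n : ℕ} {φ : L.Formula (Fin n)}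
    {θs : Fin n → L.Formula Unit} (hθs : ∀ i, θs i ∈ Θ) (M : S.ModelType) {xs : Fin n → M}
    (hxs : Defines θs xs) :
    M ⊨ thetaClose φ θs ↔ φ.Realize xs := by
  rw [realize_thetaClose]
  refine ⟨fun ⟨ys, hφ, hys⟩ => ?_, fun h => ⟨xs, h, hxs⟩⟩
  rwa [(hS.existsUnique_defines hθs M).unique hys hxs] at hφ

theorem decided_of_isAtomic (hS : ClosedUnderThetaRule S Θ) (hatom : DecidesThetaAtomic S Θ)
    {θ₀ : L.Formula Unit} (hθ₀ : θ₀ ∈ Θ) {n : ℕ} {ψ : L.BoundedFormula Empty n}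
    (hψ : ψ.IsAtomic) : Decided S Θ ψ := by
  intro θs hθs
  -- `hatom` needs at least one variable, so `ψ` gets a dummy one, named by `θ₀`.
  let φ : L.Formula (Fin (n + 1)) := ψ.toFormula.relabel (Sum.elim Empty.elim Fin.castSucc)
  have hθs' := forall_snoc_mem hθs hθ₀
  have hφ : ∀ (M : ModelType.{u, v, max u v} S) (xs : Fin n → M), Defines θs xs →
      (M ⊨ thetaClose φ (Fin.snoc θs θ₀) ↔ ψ.Realize default xs) := by
    intro M xs hxs
    obtain ⟨a, ha⟩ := hS.exists_realize hθ₀ M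
    rw [hS.realize_thetaClose_iff hθs' M (defines_snoc.2 ⟨hxs, ha⟩)]
    simp only [φ, Formula.realize_relabel, realize_toFormula]
    rw [Subsingleton.elim (_ ∘ Sum.inl) default]
    exact iff_of_eq (congrArg _ Fin.snoc_comp_castSucc)
  refine (hatom n φ (hψ.toFormula.relabel _) _ hθs').imp
    (fun h M xs hxs => (hφ M xs hxs).1 (models_sentence_iff.1 h M))
    (fun h M xs hxs => ?_)
  rw [realize_not, ← hφ M xs hxs, ← Sentence.realize_not]
  exact models_sentence_iff.1 h M

theorem decided_all (hS : ClosedUnderThetaRule S Θ) {k : ℕ} {χ : L.BoundedFormula Empty (k + 1)}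
    (hχ : Decided S Θ χ) : Decided S Θ χ.all := by
  intro θs hθs
  by_cases hall : ∀ θ ∈ Θ, HoldsAtDefined S (Fin.snoc θs θ) χ
  · have hsubst : S ⊨ᵇ allClose (substInit χ θs) := by
      refine hS.models_allClose _ fun θ hθ => models_sentence_iff.2 fun M => ?_
      obtain ⟨xs, hxs⟩ := (hS.existsUnique_defines hθs M).exists
      obtain ⟨a, ha⟩ := hS.exists_realize hθ M
      simp only [realize_exClose, Formula.realize_inf, realize_substInit]
      exact ⟨a, ⟨xs, hxs, hall θ hθ M _ (defines_snoc.2 ⟨hxs, ha⟩)⟩, ha⟩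
    refine Or.inl fun M xs hxs => realize_all.2 fun b => ?_
    obtain ⟨ys, hys, hχys⟩ :=
      realize_substInit.1 (realize_allClose.1 (models_sentence_iff.1 hsubst M) b)
    rwa [(hS.existsUnique_defines hθs M).unique hys hxs] at hχys
  · push Not at hall
    obtain ⟨θ, hθ, hfalse⟩ := hall
    have hnot := (hχ _ (forall_snoc_mem hθs hθ)).resolve_left hfalse
    refine Or.inr fun M xs hxs => ?_
    obtain ⟨a, ha⟩ := hS.exists_realize hθ M
    simp only [realize_not, realize_all, not_forall]
    exact ⟨a, realize_not.1 (hnot M _ (defines_snoc.2 ⟨hxs, ha⟩))⟩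

theorem decided (hS : ClosedUnderThetaRule S Θ) (hatom : DecidesThetaAtomic S Θ)
    {θ₀ : L.Formula Unit} (hθ₀ : θ₀ ∈ Θ) {n : ℕ} (ψ : L.BoundedFormula Empty n) :
    Decided S Θ ψ := by
  induction ψ with
  | falsum => exact decided_falsum
  | equal t₁ t₂ => exact hS.decided_of_isAtomic hatom hθ₀ (.equal t₁ t₂)
  | rel R ts => exact hS.decided_of_isAtomic hatom hθ₀ (.rel R ts)
  | imp ψ₁ ψ₂ ih₁ ih₂ => exact ih₁.imp ih₂
  | all χ ih => exact hS.decided_all ih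

theorem models_or_models_not (hS : ClosedUnderThetaRule S Θ) (hatom : DecidesThetaAtomic S Θ)
    (σ : L.Sentence) : S ⊨ᵇ σ ∨ S ⊨ᵇ σ.not := by
  rcases Θ.eq_empty_or_nonempty with rfl | ⟨θ₀, hθ₀⟩
  · have hbot : S ⊨ᵇ allClose ⊥ := hS.models_allClose ⊥ fun _ h => h.elim
    refine Or.inl (models_sentence_iff.2 fun M => ?_)
    exact (realize_allClose.1 (models_sentence_iff.1 hbot M) (Classical.arbitrary M)).elim
  · simpa only [holdsAtDefined_iff_models] using hS.decided hatom hθ₀ σ finZeroElim finZeroElim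

end ClosedUnderThetaRule

end ThetaRule

section ThetaProv

variable {L : FirstOrder.Language.{u, v}} {Θ : Set (L.Formula Unit)} {T : L.Theory}

theorem ThetaProv.of_models {σ : L.Sentence} (h : T ⊨ᵇ σ) : ThetaProv L Θ T σ :=
  .fo T (fun _ => .ax) h

theorem thetaProv_iff_models {σ : L.Sentence} :
    ThetaProv L Θ T σ ↔ {σ | ThetaProv L Θ T σ} ⊨ᵇ σ :=
  ⟨models_sentence_of_mem, .fo _ fun _ => id⟩

theorem closedUnderThetaRule_thetaProv (hΘ : ∀ θ ∈ Θ, IsUniquenessFormula T θ) :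
    ClosedUnderThetaRule {σ | ThetaProv L Θ T σ} Θ where
  models_uniqSentence θ hθ := thetaProv_iff_models.1 (.of_models (hΘ θ hθ))
  models_allClose φ h :=
    thetaProv_iff_models.1 (.rule φ fun θ hθ => thetaProv_iff_models.2 (h θ hθ))

end ThetaProv

/-- Syntactic completeness, general form: if T decides all Θ-atomic sentences,
then [T, ⊢_Θ] is complete. -/
theorem stmt_10 {L : FirstOrder.Language.{u, v}} (T : L.Theory) (Θ : Set (L.Formula Unit))
    (hΘ : ∀ θ ∈ Θ, IsUniquenessFormula T θ)
    (hdec : ∀ (n : ℕ) (φ : L.Formula (Fin (n + 1))), φ.IsAtomic →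
      ∀ θs : Fin (n + 1) → L.Formula Unit, (∀ i, θs i ∈ Θ) →
        T ⊨ᵇ thetaClose φ θs ∨ T ⊨ᵇ (thetaClose φ θs).not) :
    ∀ σ : L.Sentence, ThetaProv L Θ T σ ∨ ThetaProv L Θ T σ.not := by
  have hatom : DecidesThetaAtomic {σ | ThetaProv L Θ T σ} Θ := fun n φ hφ θs hθs =>
    (hdec n φ hφ θs hθs).imp (fun h => thetaProv_iff_models.1 (.of_models h))
      (fun h => thetaProv_iff_models.1 (.of_models h))
  intro σ
  simpa only [← thetaProv_iff_models] using
    (closedUnderThetaRule_thetaProv hΘ).models_or_models_not hatom σ
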